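/- arXiv:2405.06937 — 2 statements merged into one kernel-verified Lean document; each statement's English description precedes it below -/
import Mathlib

section
/- Let g be a Schwartz function on ℝ and f ∈ L²(ℝ). Then for all (t, ξ, λ) ∈ ℝ³: ∂_t T_f^{(g)}(t, ξ, λ) = −T_f^{(g')}(t, ξ, λ) + 2πi ξ T_f^{(g)}(t, ξ, λ) + 2πi λ T_f^{(tg)}(t, ξ, λ). -/
open MeasureTheory Real Complex Finset

noncomputable section

/-- The chirplet transform of `f` with window `g`. -/
def CT (f g : ℝ → ℂ) (t ξ lam : ℝ) : ℂ :=
  ∫ x : ℝ, f x * (starRingEnd ℂ) (g (x - t)) *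
    Complex.exp (-(2 * (π : ℂ) * Complex.I * (ξ : ℂ) * ((x : ℂ) - (t : ℂ)))
      - Complex.I * (π : ℂ) * (lam : ℂ) * ((x : ℂ) - (t : ℂ)) ^ 2)

/-- The window `x ↦ x^n g x`. -/
def tw (n : ℕ) (g : ℝ → ℂ) : ℝ → ℂ := fun x => (x : ℂ) ^ n * g x

/-- The chirplet transform as a function of the time variable. -/
def Tt (f g : ℝ → ℂ) (ξ lam : ℝ) : ℝ → ℂ := fun t => CT f g t ξ lam

/-!
Substituting `y = x - t`, the transform is the correlation `∫ f x * K (x - t) dx` of `f` with the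
kernel `K y = conj (g y) * e y`, where `e y = exp (-2πiξy - iπλy²)` has modulus one. Both `K` and
`K'` are bounded by a multiple of `(1 + y²)⁻¹ ∈ L²`, and `(1 + (x - s)²)⁻¹ ≤ 3 (1 + (x - t)²)⁻¹`
for `|s - t| ≤ 1`, so `|f x| (1 + (x - t)²)⁻¹ ∈ L¹` dominates the `s`-derivatives near `t` and we
may differentiate under the integral sign. The product rule gives
`K' = conj g' * e - 2πiξ K - 2πiλ conj (y g) * e`, and each term integrates against `f` to one of
the three transforms on the right.
-/

section QuadraticDecay

variable {E : Type*} [NormedAddCommGroup E]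

def QuadraticDecay (K : ℝ → E) : Prop :=
  ∃ C, ∀ y, ‖K y‖ ≤ C * (1 + y ^ 2)⁻¹

theorem memLp_two_inv_one_add_sq : MemLp (fun y : ℝ => (1 + y ^ 2)⁻¹) 2 := by
  have hc : Continuous fun y : ℝ => (1 + y ^ 2)⁻¹ :=
    Continuous.inv₀ (by fun_prop) fun y => by positivity
  rw [memLp_two_iff_integrable_sq hc.aestronglyMeasurable]
  refine integrable_inv_one_add_sq.mono' (hc.pow 2).aestronglyMeasurable
    (Filter.Eventually.of_forall fun y => ?_)
  have h0 : 0 ≤ (1 + y ^ 2)⁻¹ := by positivity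
  have h1 : (1 + y ^ 2)⁻¹ ≤ 1 := inv_le_one_of_one_le₀ (by nlinarith)
  rw [Real.norm_eq_abs, abs_of_nonneg (by positivity)]
  nlinarith

theorem QuadraticDecay.memLp_two {K : ℝ → E} (hK : QuadraticDecay K)
    (hm : AEStronglyMeasurable K) : MemLp K 2 := by
  obtain ⟨C, hC⟩ := hK
  refine memLp_two_inv_one_add_sq.of_le_mul (c := C) hm (Filter.Eventually.of_forall fun y => ?_)
  rw [Real.norm_eq_abs, abs_of_nonneg (by positivity)]
  exact hC y

theorem QuadraticDecay.sub {K L : ℝ → E} (hK : QuadraticDecay K) (hL : QuadraticDecay L) :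
    QuadraticDecay (K - L) := by
  obtain ⟨C, hC⟩ := hK
  obtain ⟨D, hD⟩ := hL
  exact ⟨C + D, fun y => (norm_sub_le _ _).trans (by rw [add_mul]; exact add_le_add (hC y) (hD y))⟩

theorem QuadraticDecay.const_mul {K : ℝ → ℂ} (hK : QuadraticDecay K) (c : ℂ) :
    QuadraticDecay fun y => c * K y := by
  obtain ⟨C, hC⟩ := hK
  refine ⟨‖c‖ * C, fun y => ?_⟩
  rw [norm_mul, mul_assoc]
  exact mul_le_mul_of_nonneg_left (hC y) (norm_nonneg c)

theorem QuadraticDecay.of_norm_le {K L : ℝ → E} (hK : QuadraticDecay K)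
    (hLK : ∀ y, ‖L y‖ ≤ ‖K y‖) : QuadraticDecay L := by
  obtain ⟨C, hC⟩ := hK
  exact ⟨C, fun y => (hLK y).trans (hC y)⟩

end QuadraticDecay

theorem inv_one_add_sq_le_three_mul {a b : ℝ} (hab : |a - b| ≤ 1) :
    (1 + a ^ 2)⁻¹ ≤ 3 * (1 + b ^ 2)⁻¹ := by
  have hd : (a - b) ^ 2 ≤ 1 := by
    rw [← sq_abs]
    nlinarith [abs_nonneg (a - b)]
  have hb : 1 + b ^ 2 ≤ 3 * (1 + a ^ 2) := by nlinarith [sq_nonneg (2 * a - b)]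
  rw [← div_eq_mul_inv, le_div_iff₀ (by positivity), ← div_eq_inv_mul,
    div_le_iff₀ (by positivity)]
  linarith

theorem QuadraticDecay.integrable_mul_comp_sub {f K : ℝ → ℂ} (hf : MemLp f 2)
    (hK : QuadraticDecay K) (hm : AEStronglyMeasurable K) (t : ℝ) :
    Integrable fun x => f x * K (x - t) :=
  hf.integrable_mul ((hK.memLp_two hm).comp_measurePreserving (measurePreserving_sub_right _ t))

theorem hasDerivAt_integral_mul_comp_sub {f K : ℝ → ℂ} (hf : MemLp f 2)
    (hK : Differentiable ℝ K) (hK₀ : QuadraticDecay K) (hK₁ : QuadraticDecay (deriv K))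
    (t : ℝ) :
    HasDerivAt (fun s => ∫ x, f x * K (x - s)) (-∫ x, f x * deriv K (x - t)) t := by
  obtain ⟨C, hC⟩ := hK₁
  have hweight : MemLp (fun x : ℝ => 3 * C * (1 + (x - t) ^ 2)⁻¹) 2 :=
    (memLp_two_inv_one_add_sq.comp_measurePreserving (measurePreserving_sub_right _ t)).const_mul _
  have hdom : ∀ x, ∀ s ∈ Metric.ball t 1,
      ‖-(f x * deriv K (x - s))‖ ≤ ‖f x‖ * (3 * C * (1 + (x - t) ^ 2)⁻¹) := by
    intro x s hs
    have hst : |(x - s) - (x - t)| ≤ 1 := by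
      rw [Metric.mem_ball, Real.dist_eq] at hs
      rw [sub_sub_sub_cancel_left, abs_sub_comm]
      exact hs.le
    have hC₀ : 0 ≤ C := (norm_nonneg _).trans ((hC 0).trans (by norm_num))
    rw [norm_neg, norm_mul, mul_assoc 3, mul_left_comm 3]
    gcongr
    exact (hC _).trans (by gcongr; exact inv_one_add_sq_le_three_mul hst)
  have hderiv : ∀ x s, HasDerivAt (fun s => f x * K (x - s)) (-(f x * deriv K (x - s))) s := by
    intro x s
    have hsub : HasDerivAt (fun s : ℝ => x - s) (-1) s := by
      simpa using (hasDerivAt_id s).const_sub x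
    simpa using ((hK (x - s)).hasDerivAt.scomp s hsub).const_mul (f x)
  have key := hasDerivAt_integral_of_dominated_loc_of_deriv_le (Metric.ball_mem_nhds t one_pos)
    (Filter.Eventually.of_forall fun s =>
      (hK₀.integrable_mul_comp_sub hf hK.continuous.aestronglyMeasurable s).aestronglyMeasurable)
    (hK₀.integrable_mul_comp_sub hf hK.continuous.aestronglyMeasurable t)
    (hf.1.mul ((measurable_deriv K).comp (measurable_sub_const t)).aestronglyMeasurable).neg
    (Filter.Eventually.of_forall hdom) (hf.norm.integrable_mul hweight)
    (Filter.Eventually.of_forall fun x s _ => hderiv x s)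
  simpa only [integral_neg] using key.2

theorem SchwartzMap.exists_pow_mul_norm_le_inv_one_add_sq {F : Type*}
    [NormedAddCommGroup F] [NormedSpace ℝ F] (φ : SchwartzMap ℝ F) (k : ℕ) :
    ∃ C, ∀ y : ℝ, |y| ^ k * ‖φ y‖ ≤ C * (1 + y ^ 2)⁻¹ := by
  obtain ⟨C₀, -, hC₀⟩ := φ.decay k 0
  obtain ⟨C₂, -, hC₂⟩ := φ.decay (k + 2) 0
  refine ⟨C₀ + C₂, fun y => ?_⟩
  have h₀ := hC₀ y
  have h₂ := hC₂ y
  simp only [norm_iteratedFDeriv_zero, Real.norm_eq_abs, pow_add, sq_abs] at h₀ h₂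
  rw [← div_eq_mul_inv, le_div_iff₀ (by positivity)]
  nlinarith

theorem SchwartzMap.quadraticDecay {F : Type*} [NormedAddCommGroup F] [NormedSpace ℝ F]
    (φ : SchwartzMap ℝ F) : QuadraticDecay φ := by
  obtain ⟨C, hC⟩ := φ.exists_pow_mul_norm_le_inv_one_add_sq 0
  exact ⟨C, fun y => by simpa using hC y⟩

theorem SchwartzMap.quadraticDecay_tw (φ : SchwartzMap ℝ ℂ) (n : ℕ) :
    QuadraticDecay (tw n φ) := by
  obtain ⟨C, hC⟩ := φ.exists_pow_mul_norm_le_inv_one_add_sq n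
  exact ⟨C, fun y => by simpa [tw] using hC y⟩

theorem SchwartzMap.quadraticDecay_deriv {F : Type*} [NormedAddCommGroup F]
    [NormedSpace ℝ F] (φ : SchwartzMap ℝ F) : QuadraticDecay (deriv φ) := by
  simpa only [← funext (SchwartzMap.derivCLM_apply ℝ φ)] using
    (SchwartzMap.derivCLM ℝ F φ).quadraticDecay

def chirp (ξ lam y : ℝ) : ℂ :=
  Complex.exp (-(2 * (π : ℂ) * Complex.I * (ξ : ℂ) * (y : ℂ))
    - Complex.I * (π : ℂ) * (lam : ℂ) * (y : ℂ) ^ 2)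

theorem norm_chirp (ξ lam y : ℝ) : ‖chirp ξ lam y‖ = 1 := by
  rw [chirp, Complex.norm_exp]
  simp [← Complex.ofReal_pow]

theorem hasDerivAt_chirp (ξ lam y : ℝ) :
    HasDerivAt (chirp ξ lam)
      (chirp ξ lam y * (-(2 * (π : ℂ) * Complex.I * ξ) - 2 * (π : ℂ) * Complex.I * lam * y)) y := by
  have hy : HasDerivAt (fun y : ℝ => (y : ℂ)) 1 y := (hasDerivAt_id y).ofReal_comp
  have hphase : HasDerivAt (fun y : ℝ => -(2 * (π : ℂ) * Complex.I * ξ * y)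
      - Complex.I * (π : ℂ) * lam * (y : ℂ) ^ 2)
      (-(2 * (π : ℂ) * Complex.I * ξ) - 2 * (π : ℂ) * Complex.I * lam * y) y :=
    (((hy.const_mul _).neg).sub ((hy.pow 2).const_mul _)).congr_deriv (by ring)
  exact hphase.cexp

def chirpKernel (φ : ℝ → ℂ) (ξ lam y : ℝ) : ℂ :=
  starRingEnd ℂ (φ y) * chirp ξ lam y

theorem CT_eq_integral_chirpKernel (f φ : ℝ → ℂ) (t ξ lam : ℝ) :
    CT f φ t ξ lam = ∫ x, f x * chirpKernel φ ξ lam (x - t) := by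
  simp only [CT, chirpKernel, chirp, Complex.ofReal_sub, mul_assoc]

theorem norm_chirpKernel (φ : ℝ → ℂ) (ξ lam y : ℝ) : ‖chirpKernel φ ξ lam y‖ = ‖φ y‖ := by
  rw [chirpKernel, norm_mul, norm_chirp, RCLike.norm_conj, mul_one]

theorem measurable_chirpKernel {φ : ℝ → ℂ} (hφ : Measurable φ) (ξ lam : ℝ) :
    Measurable (chirpKernel φ ξ lam) := by
  unfold chirpKernel chirp
  fun_prop

theorem QuadraticDecay.chirpKernel {φ : ℝ → ℂ} (hφ : QuadraticDecay φ) (ξ lam : ℝ) :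
    QuadraticDecay (chirpKernel φ ξ lam) :=
  hφ.of_norm_le fun y => (norm_chirpKernel φ ξ lam y).le

theorem integrable_mul_chirpKernel_comp_sub {f φ : ℝ → ℂ} (hf : MemLp f 2)
    (hφ : QuadraticDecay φ) (hm : Measurable φ) (ξ lam t : ℝ) :
    Integrable fun x => f x * chirpKernel φ ξ lam (x - t) :=
  (hφ.chirpKernel ξ lam).integrable_mul_comp_sub hf
    (measurable_chirpKernel hm ξ lam).aestronglyMeasurable t

theorem hasDerivAt_chirpKernel {φ : ℝ → ℂ} {y : ℝ} (hφ : DifferentiableAt ℝ φ y) (ξ lam : ℝ) :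
    HasDerivAt (chirpKernel φ ξ lam)
      (chirpKernel (deriv φ) ξ lam y - 2 * (π : ℂ) * Complex.I * ξ * chirpKernel φ ξ lam y
        - 2 * (π : ℂ) * Complex.I * lam * chirpKernel (tw 1 φ) ξ lam y) y := by
  have hconj : HasDerivAt (fun y => starRingEnd ℂ (φ y)) (starRingEnd ℂ (deriv φ y)) y :=
    hφ.hasDerivAt.star
  refine (hconj.mul (hasDerivAt_chirp ξ lam y)).congr_deriv ?_
  simp only [chirpKernel, tw, pow_one, map_mul, Complex.conj_ofReal]
  ring

theorem chirplet_deriv_replacement_first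
    (g : SchwartzMap ℝ ℂ) (f : ℝ → ℂ) (hf : MemLp f 2 (volume : Measure ℝ))
    (t ξ lam : ℝ) :
    deriv (Tt f (⇑g) ξ lam) t =
      -CT f (deriv (⇑g)) t ξ lam
        + 2 * (π : ℂ) * Complex.I * (ξ : ℂ) * CT f (⇑g) t ξ lam
        + 2 * (π : ℂ) * Complex.I * (lam : ℂ) * CT f (tw 1 (⇑g)) t ξ lam := by
  have hK (y : ℝ) := hasDerivAt_chirpKernel (g.differentiableAt (x := y)) ξ lam
  have hK' : QuadraticDecay (deriv (chirpKernel g ξ lam)) := by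
    rw [show deriv (chirpKernel g ξ lam) = _ from funext fun y => (hK y).deriv]
    exact ((g.quadraticDecay_deriv.chirpKernel ξ lam).sub
      ((g.quadraticDecay.chirpKernel ξ lam).const_mul _)).sub
      (((g.quadraticDecay_tw 1).chirpKernel ξ lam).const_mul _)
  have hA := integrable_mul_chirpKernel_comp_sub hf g.quadraticDecay_deriv
    (measurable_deriv _) ξ lam t
  have hB := (integrable_mul_chirpKernel_comp_sub hf g.quadraticDecay
    g.continuous.measurable ξ lam t).const_mul (2 * (π : ℂ) * Complex.I * ξ)
  have hC := (integrable_mul_chirpKernel_comp_sub hf (g.quadraticDecay_tw 1)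
    (by unfold tw; fun_prop) ξ lam t).const_mul (2 * (π : ℂ) * Complex.I * lam)
  rw [show Tt f g ξ lam = fun s => ∫ x, f x * chirpKernel g ξ lam (x - s) from
      funext fun s => CT_eq_integral_chirpKernel f g s ξ lam,
    (hasDerivAt_integral_mul_comp_sub hf (fun y => (hK y).differentiableAt)
      (g.quadraticDecay.chirpKernel ξ lam) hK' t).deriv]
  simp only [(hK _).deriv, mul_sub, mul_left_comm (f _)]
  rw [integral_sub ?_ hC, integral_sub hA hB, integral_const_mul, integral_const_mul,
    ← CT_eq_integral_chirpKernel, ← CT_eq_integral_chirpKernel, ← CT_eq_integral_chirpKernel]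
  · ring
  · exact hA.sub hB
end
end

section
/- Let g be a Schwartz function on ℝ and f ∈ L²(ℝ). Then for all (t, ξ, λ) ∈ ℝ³: ∂²_{tt} T_f^{(g)} = T_f^{(g'')} − 4πi ξ T_f^{(g')} − 2πi λ T_f^{(tg')} + (2πi ξ)² T_f^{(g)} + 2(2πi ξ)(2πi λ) T_f^{(tg)} − 2πi λ (T_f^{(g)} + T_f^{(tg')}) + (2πi λ)² T_f^{(t²g)}, where all transforms are evaluated at (t, ξ, λ). -/
open MeasureTheory Real Complex Finset

noncomputable section

/-! With the kernel `K_h u = conj (h u) * exp (-2πiξu - iπλu²)` one has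
`CT f h t ξ λ = ∫ f x * K_h (x - t)`. Differentiating under the integral sign, with the dominating
function `(1 + |x - t₀|)⁻² * |f x|` (integrable as a product of two L² functions), and using
`K_h' = K_{h'} - 2πiξ K_h - 2πiλ K_{th}`, gives the first-order rule
`∂ₜ T^{(h)} = -T^{(h')} + 2πiξ T^{(h)} + 2πiλ T^{(th)}` for every Schwartz window `h`.
Applying it to `g`, `g'` and `tg`, and using `(tg)' = g + tg'`, gives the second-order formula. -/

open Asymptotics Filter ComplexConjugate

namespace Chirplet

def oneAddAbsSqInv (u : ℝ) : ℝ := ((1 + |u|) ^ 2)⁻¹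

lemma oneAddAbsSqInv_pos (u : ℝ) : 0 < oneAddAbsSqInv u := by
  unfold oneAddAbsSqInv; positivity

lemma continuous_oneAddAbsSqInv : Continuous oneAddAbsSqInv :=
  Continuous.inv₀ (by fun_prop) fun u => by positivity

lemma memLp_two_oneAddAbsSqInv : MemLp oneAddAbsSqInv 2 := by
  rw [memLp_two_iff_integrable_sq continuous_oneAddAbsSqInv.aestronglyMeasurable]
  refine (integrable_one_add_norm (E := ℝ) (r := 4) (by norm_num)).congr
    (Eventually.of_forall fun u => ?_)
  simp only [oneAddAbsSqInv]
  rw [Real.norm_eq_abs, ← inv_pow, ← pow_mul,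
    show (4 : ℝ) = ((4 : ℕ) : ℝ) by norm_num, Real.rpow_neg (by positivity),
    Real.rpow_natCast, inv_pow]

lemma oneAddAbsSqInv_sub_le {x t t₀ : ℝ} (ht : |t - t₀| ≤ 1) :
    oneAddAbsSqInv (x - t) ≤ 4 * oneAddAbsSqInv (x - t₀) := by
  have htri : |x - t₀| ≤ |x - t| + 1 := by
    have := abs_sub_le x t t₀
    linarith
  unfold oneAddAbsSqInv
  rw [← div_eq_mul_inv, inv_eq_one_div, div_le_div_iff₀ (by positivity) (by positivity)]
  nlinarith [abs_nonneg (x - t), abs_nonneg (x - t₀)]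

variable {f K : ℝ → ℂ}

lemma integrable_oneAddAbsSqInv_sub_mul_norm (hf : MemLp f 2) (t : ℝ) :
    Integrable fun x => oneAddAbsSqInv (x - t) * ‖f x‖ :=
  ((memLp_two_oneAddAbsSqInv.comp_measurePreserving
    (measurePreserving_sub_right volume t)).integrable_mul hf.norm :)

lemma integrable_mul_comp_sub (hf : MemLp f 2) (hK : Measurable K)
    (hKO : K =O[⊤] oneAddAbsSqInv) (t : ℝ) :
    Integrable fun x => f x * K (x - t) := by
  obtain ⟨C, -, hC⟩ := hKO.exists_pos
  rw [isBigOWith_top] at hC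
  refine ((integrable_oneAddAbsSqInv_sub_mul_norm hf t).const_mul C).mono'
    (hf.1.mul (hK.comp (measurable_sub_const t)).aestronglyMeasurable)
    (Eventually.of_forall fun x => ?_)
  rw [norm_mul, mul_comm ‖f x‖, ← mul_assoc]
  gcongr
  simpa [abs_of_pos (oneAddAbsSqInv_pos _)] using hC (x - t)

theorem hasDerivAt_integral_mul_comp_sub (hf : MemLp f 2) (hK : Differentiable ℝ K)
    (hK₀ : K =O[⊤] oneAddAbsSqInv) (hK₁ : deriv K =O[⊤] oneAddAbsSqInv) (t₀ : ℝ) :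
    HasDerivAt (fun t => ∫ x, f x * K (x - t)) (-∫ x, f x * deriv K (x - t₀)) t₀ := by
  obtain ⟨C, hC₀, hC⟩ := hK₁.exists_pos
  rw [isBigOWith_top] at hC
  have hbound : ∀ᵐ x, ∀ t ∈ Metric.closedBall t₀ 1,
      ‖-(f x * deriv K (x - t))‖ ≤ 4 * C * oneAddAbsSqInv (x - t₀) * ‖f x‖ := by
    refine Eventually.of_forall fun x t ht => ?_
    rw [norm_neg, norm_mul, mul_comm ‖f x‖]
    gcongr
    calc ‖deriv K (x - t)‖ ≤ C * oneAddAbsSqInv (x - t) := by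
          simpa [abs_of_pos (oneAddAbsSqInv_pos _)] using hC (x - t)
      _ ≤ C * (4 * oneAddAbsSqInv (x - t₀)) := by
          gcongr
          exact oneAddAbsSqInv_sub_le (by simpa [Real.dist_eq] using ht)
      _ = 4 * C * oneAddAbsSqInv (x - t₀) := by ring
  have hdiff : ∀ᵐ x, ∀ t ∈ Metric.closedBall t₀ 1,
      HasDerivAt (fun t => f x * K (x - t)) (-(f x * deriv K (x - t))) t :=
    Eventually.of_forall fun x t _ => by
      simpa using ((hK (x - t)).hasDerivAt.scomp t ((hasDerivAt_id' t).const_sub x)).const_mul (f x)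
  have hK_meas := hK.continuous.measurable
  simpa only [integral_neg] using (hasDerivAt_integral_of_dominated_loc_of_deriv_le
    (Metric.closedBall_mem_nhds t₀ one_pos)
    (Eventually.of_forall fun t => (integrable_mul_comp_sub hf hK_meas hK₀ t).1)
    (integrable_mul_comp_sub hf hK_meas hK₀ t₀)
    (integrable_mul_comp_sub hf (measurable_deriv K) hK₁ t₀).1.neg hbound
    (((integrable_oneAddAbsSqInv_sub_mul_norm hf t₀).const_mul (4 * C)).congr
      (Eventually.of_forall fun x => by simp only [mul_assoc])) hdiff).2

def chirp (ξ lam u : ℝ) : ℂ :=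
  Complex.exp (-(2 * π * I * ξ * u) - I * π * lam * u ^ 2)

lemma norm_chirp (ξ lam u : ℝ) : ‖chirp ξ lam u‖ = 1 := by
  unfold chirp
  rw [Complex.norm_exp]
  convert Real.exp_zero
  simp [Complex.mul_re, Complex.mul_im, ← Complex.ofReal_pow]

lemma hasDerivAt_chirp (ξ lam u : ℝ) :
    HasDerivAt (chirp ξ lam)
      (-(2 * π * I * ξ + 2 * π * I * lam * u) * chirp ξ lam u) u := by
  have hu : HasDerivAt (fun v : ℝ => (v : ℂ)) 1 u := (hasDerivAt_id u).ofReal_comp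
  have harg := (hu.const_mul (2 * π * I * ξ)).fun_neg.fun_sub
    ((hu.fun_pow 2).const_mul (I * π * lam))
  refine harg.cexp.congr_deriv ?_
  unfold chirp
  push_cast
  ring

def chirpKernel (h : ℝ → ℂ) (ξ lam u : ℝ) : ℂ := conj (h u) * chirp ξ lam u

lemma CT_eq_integral_chirpKernel (f h : ℝ → ℂ) (t ξ lam : ℝ) :
    CT f h t ξ lam = ∫ x, f x * chirpKernel h ξ lam (x - t) := by
  unfold CT chirpKernel chirp
  congr 1 with x
  push_cast
  ring

lemma norm_chirpKernel (h : ℝ → ℂ) (ξ lam u : ℝ) : ‖chirpKernel h ξ lam u‖ = ‖h u‖ := by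
  rw [chirpKernel, norm_mul, norm_chirp, mul_one, RCLike.norm_conj]

lemma isBigO_chirpKernel {h : ℝ → ℂ} {φ : ℝ → ℝ} {l : Filter ℝ} (hh : h =O[l] φ) (ξ lam : ℝ) :
    chirpKernel h ξ lam =O[l] φ :=
  isBigO_norm_left.1 <| by simpa only [norm_chirpKernel] using isBigO_norm_left.2 hh

lemma measurable_chirpKernel {h : ℝ → ℂ} (hh : Measurable h) (ξ lam : ℝ) :
    Measurable (chirpKernel h ξ lam) :=
  (Complex.continuous_conj.measurable.comp hh).mul (by unfold chirp; fun_prop)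

lemma hasDerivAt_chirpKernel {h : ℝ → ℂ} {u : ℝ} (hh : DifferentiableAt ℝ h u) (ξ lam : ℝ) :
    HasDerivAt (chirpKernel h ξ lam)
      (chirpKernel (deriv h) ξ lam u - 2 * π * I * ξ * chirpKernel h ξ lam u
        - 2 * π * I * lam * chirpKernel (tw 1 h) ξ lam u) u := by
  have hconj : HasDerivAt (fun v => conj (h v)) (conj (deriv h u)) u := by
    simpa [Complex.star_def] using hh.hasDerivAt.star
  refine (hconj.mul (hasDerivAt_chirp ξ lam u)).congr_deriv ?_
  simp only [chirpKernel, tw, map_mul, Complex.conj_ofReal, pow_one]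
  ring

lemma integrable_mul_chirpKernel_comp_sub (hf : MemLp f 2) {h : ℝ → ℂ} (hm : Measurable h)
    (hO : h =O[⊤] oneAddAbsSqInv) (ξ lam t : ℝ) :
    Integrable fun x => f x * chirpKernel h ξ lam (x - t) :=
  integrable_mul_comp_sub hf (measurable_chirpKernel hm ξ lam) (isBigO_chirpKernel hO ξ lam) t

theorem hasDerivAt_CT (hf : MemLp f 2) {h : ℝ → ℂ} (hd : Differentiable ℝ h)
    (h₀ : h =O[⊤] oneAddAbsSqInv) (h₁ : deriv h =O[⊤] oneAddAbsSqInv)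
    (hx : tw 1 h =O[⊤] oneAddAbsSqInv) (ξ lam t : ℝ) :
    HasDerivAt (Tt f h ξ lam)
      (-CT f (deriv h) t ξ lam + 2 * π * I * ξ * CT f h t ξ lam
        + 2 * π * I * lam * CT f (tw 1 h) t ξ lam) t := by
  have hK : Differentiable ℝ (chirpKernel h ξ lam) := fun u =>
    (hasDerivAt_chirpKernel (hd u) ξ lam).differentiableAt
  have hK' : deriv (chirpKernel h ξ lam) = fun u => chirpKernel (deriv h) ξ lam u
      - 2 * π * I * ξ * chirpKernel h ξ lam u - 2 * π * I * lam * chirpKernel (tw 1 h) ξ lam u :=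
    funext fun u => (hasDerivAt_chirpKernel (hd u) ξ lam).deriv
  have hK'O : deriv (chirpKernel h ξ lam) =O[⊤] oneAddAbsSqInv := by
    rw [hK']
    exact ((isBigO_chirpKernel h₁ ξ lam).sub ((isBigO_chirpKernel h₀ ξ lam).const_mul_left _)).sub
      ((isBigO_chirpKernel hx ξ lam).const_mul_left _)
  have hc := hd.continuous
  have I₀ := integrable_mul_chirpKernel_comp_sub hf hc.measurable h₀ ξ lam t
  have I₁ := integrable_mul_chirpKernel_comp_sub hf (measurable_deriv h) h₁ ξ lam t
  have I₂ := integrable_mul_chirpKernel_comp_sub hf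
    (by unfold tw; fun_prop : Continuous (tw 1 h)).measurable hx ξ lam t
  have hsplit : ∫ x, f x * deriv (chirpKernel h ξ lam) (x - t) = CT f (deriv h) t ξ lam
      - 2 * π * I * ξ * CT f h t ξ lam - 2 * π * I * lam * CT f (tw 1 h) t ξ lam := calc
    _ = ∫ x, (f x * chirpKernel (deriv h) ξ lam (x - t)
          - 2 * π * I * ξ * (f x * chirpKernel h ξ lam (x - t)))
          - 2 * π * I * lam * (f x * chirpKernel (tw 1 h) ξ lam (x - t)) := by
      congr 1 with x
      rw [hK']
      ring
    _ = _ := by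
      rw [integral_sub (I₁.sub' (I₀.const_mul _)) (I₂.const_mul _),
        integral_sub I₁ (I₀.const_mul _), integral_const_mul, integral_const_mul]
      simp only [CT_eq_integral_chirpKernel]
  have hT : Tt f h ξ lam = fun t => ∫ x, f x * chirpKernel h ξ lam (x - t) :=
    funext fun t => CT_eq_integral_chirpKernel f h t ξ lam
  rw [hT]
  convert hasDerivAt_integral_mul_comp_sub hf hK (isBigO_chirpKernel h₀ ξ lam) hK'O t using 1
  rw [hsplit]
  ring

lemma tw_one_tw_one (h : ℝ → ℂ) : tw 1 (tw 1 h) = tw 2 h := by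
  ext x
  simp only [tw]
  ring

lemma deriv_tw_one {h : ℝ → ℂ} (hd : Differentiable ℝ h) : deriv (tw 1 h) = h + tw 1 (deriv h) := by
  ext x
  have hx : HasDerivAt (fun v : ℝ => (v : ℂ)) 1 x := (hasDerivAt_id x).ofReal_comp
  rw [show tw 1 h = fun y : ℝ => (y : ℂ) ^ 1 * h y from rfl,
    ((hx.fun_pow 1).fun_mul (hd x).hasDerivAt).deriv]
  simp [tw]

end Chirplet

namespace SchwartzMap

open Chirplet

lemma isBigO_oneAddAbsSqInv (h : 𝓢(ℝ, ℂ)) : ⇑h =O[⊤] oneAddAbsSqInv := by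
  refine isBigO_top.2 ⟨2 ^ 2 * ((Finset.Iic (2, 0)).sup fun m => SchwartzMap.seminorm ℝ m.1 m.2) h,
    fun u => ?_⟩
  have hu := one_add_le_sup_seminorm_apply (𝕜 := ℝ) (m := (2, 0)) le_rfl le_rfl h u
  rw [norm_iteratedFDeriv_zero, Real.norm_eq_abs] at hu
  dsimp only at hu
  rw [Real.norm_of_nonneg (oneAddAbsSqInv_pos u).le, oneAddAbsSqInv, ← div_eq_mul_inv,
    le_div_iff₀ (by positivity)]
  linarith

lemma coe_derivCLM (h : 𝓢(ℝ, ℂ)) : ⇑(derivCLM ℝ ℂ h) = deriv ⇑h :=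
  funext (derivCLM_apply ℝ h)

lemma coe_smulLeftCLM_ofReal (h : 𝓢(ℝ, ℂ)) :
    ⇑(smulLeftCLM ℂ (fun x : ℝ => (x : ℂ)) h) = tw 1 ⇑h := by
  ext x
  rw [smulLeftCLM_apply_apply (by fun_prop), tw, pow_one, smul_eq_mul]

end SchwartzMap

namespace Chirplet

open SchwartzMap

theorem hasDerivAt_CT_of_schwartz {f : ℝ → ℂ} (hf : MemLp f 2) (h : 𝓢(ℝ, ℂ)) (ξ lam t : ℝ) :
    HasDerivAt (Tt f h ξ lam)
      (-CT f (deriv h) t ξ lam + 2 * π * I * ξ * CT f h t ξ lam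
        + 2 * π * I * lam * CT f (tw 1 h) t ξ lam) t := by
  refine hasDerivAt_CT hf h.differentiable h.isBigO_oneAddAbsSqInv ?_ ?_ ξ lam t
  · simpa only [coe_derivCLM] using (derivCLM ℝ ℂ h).isBigO_oneAddAbsSqInv
  · simpa only [coe_smulLeftCLM_ofReal] using
      (smulLeftCLM ℂ (fun x : ℝ => (x : ℂ)) h).isBigO_oneAddAbsSqInv

lemma CT_deriv_tw_one {f : ℝ → ℂ} (hf : MemLp f 2) (g : 𝓢(ℝ, ℂ)) (t ξ lam : ℝ) :
    CT f (deriv (tw 1 g)) t ξ lam = CT f g t ξ lam + CT f (tw 1 (deriv g)) t ξ lam := by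
  have I₁ := integrable_mul_chirpKernel_comp_sub hf g.continuous.measurable
    g.isBigO_oneAddAbsSqInv ξ lam t
  have I₂ := integrable_mul_chirpKernel_comp_sub hf
    (smulLeftCLM ℂ (fun x : ℝ => (x : ℂ)) (derivCLM ℝ ℂ g)).continuous.measurable
    (smulLeftCLM ℂ (fun x : ℝ => (x : ℂ)) (derivCLM ℝ ℂ g)).isBigO_oneAddAbsSqInv ξ lam t
  rw [coe_smulLeftCLM_ofReal, coe_derivCLM] at I₂
  simp only [CT_eq_integral_chirpKernel, deriv_tw_one g.differentiable]
  rw [← integral_add I₁ I₂]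
  congr 1 with x
  simp only [chirpKernel, Pi.add_apply, map_add]
  ring

end Chirplet

open Chirplet SchwartzMap

theorem chirplet_deriv_replacement_second
    (g : SchwartzMap ℝ ℂ) (f : ℝ → ℂ) (hf : MemLp f 2 (volume : Measure ℝ))
    (t ξ lam : ℝ) :
    deriv (deriv (Tt f (⇑g) ξ lam)) t =
      CT f (deriv (deriv (⇑g))) t ξ lam
        - 4 * (π : ℂ) * Complex.I * (ξ : ℂ) * CT f (deriv (⇑g)) t ξ lam
        - 2 * (π : ℂ) * Complex.I * (lam : ℂ) * CT f (tw 1 (deriv (⇑g))) t ξ lam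
        + (2 * (π : ℂ) * Complex.I * (ξ : ℂ)) ^ 2 * CT f (⇑g) t ξ lam
        + 2 * (2 * (π : ℂ) * Complex.I * (ξ : ℂ)) * (2 * (π : ℂ) * Complex.I * (lam : ℂ))
            * CT f (tw 1 (⇑g)) t ξ lam
        - 2 * (π : ℂ) * Complex.I * (lam : ℂ)
            * (CT f (⇑g) t ξ lam + CT f (tw 1 (deriv (⇑g))) t ξ lam)
        + (2 * (π : ℂ) * Complex.I * (lam : ℂ)) ^ 2 * CT f (tw 2 (⇑g)) t ξ lam := by
  have hfirst : deriv (Tt f g ξ lam) = fun s => -Tt f (deriv g) ξ lam s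
      + 2 * π * I * ξ * Tt f g ξ lam s + 2 * π * I * lam * Tt f (tw 1 g) ξ lam s :=
    funext fun s => (hasDerivAt_CT_of_schwartz hf g ξ lam s).deriv
  have hg := hasDerivAt_CT_of_schwartz hf g ξ lam t
  have hg' := hasDerivAt_CT_of_schwartz hf (derivCLM ℝ ℂ g) ξ lam t
  have hxg := hasDerivAt_CT_of_schwartz hf (smulLeftCLM ℂ (fun x : ℝ => (x : ℂ)) g) ξ lam t
  rw [coe_derivCLM] at hg'
  rw [coe_smulLeftCLM_ofReal, CT_deriv_tw_one hf, tw_one_tw_one] at hxg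
  rw [hfirst, ((hg'.fun_neg.fun_add (hg.const_mul _)).fun_add (hxg.const_mul _)).deriv]
  ring
end
end
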